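/- Let a, b, c, d ∈ ℂ, let ψ₀ and ψ₁ be the two halves of the decomposition of G_{abcd} with respect to the first qubit, and set A = (b² − c²)·(a² − d²) and B = (c² − d²)·(a² − b²). Then for every z ∈ ℂ, the Cayley hyperdeterminant of the three-qubit vector z·ψ₀ + ψ₁ satisfies Det(z·ψ₀ + ψ₁) = (1/4)·(A·z⁴ − 2·(2B + A)·z² + A). (The 3-tangle of z·ψ₀ + ψ₁, as a polynomial in z, is proportional to A z⁴ − 2(2B+A) z² + A.) -/
import Mathlib


/-- The index set of three-qubit basis states. -/
abbrev QIdx3 := Fin 2 × Fin 2 × Fin 2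

/-- The first half `ψ₀` of the first-qubit decomposition of `G_{abcd}`:
`ψ₀ = (a+d)/2·|000⟩ + (a−d)/2·|011⟩ + (b+c)/2·|101⟩ + (b−c)/2·|110⟩`. -/
noncomputable def psi0 (a b c d : ℂ) : QIdx3 → ℂ := fun x =>
  if x = (0, 0, 0) then (a + d) / 2
  else if x = (0, 1, 1) then (a - d) / 2
  else if x = (1, 0, 1) then (b + c) / 2
  else if x = (1, 1, 0) then (b - c) / 2
  else 0

/-- The second half `ψ₁` of the first-qubit decomposition of `G_{abcd}`:
`ψ₁ = (a+d)/2·|111⟩ + (a−d)/2·|100⟩ + (b+c)/2·|010⟩ + (b−c)/2·|001⟩`. -/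
noncomputable def psi1 (a b c d : ℂ) : QIdx3 → ℂ := fun x =>
  if x = (1, 1, 1) then (a + d) / 2
  else if x = (1, 0, 0) then (a - d) / 2
  else if x = (0, 1, 0) then (b + c) / 2
  else if x = (0, 0, 1) then (b - c) / 2
  else 0

/-- The Cayley hyperdeterminant of a three-qubit vector. -/
noncomputable def cayleyDet (x : QIdx3 → ℂ) : ℂ :=
  x (0, 0, 0) ^ 2 * x (1, 1, 1) ^ 2 + x (0, 0, 1) ^ 2 * x (1, 1, 0) ^ 2 +
    x (0, 1, 0) ^ 2 * x (1, 0, 1) ^ 2 + x (1, 0, 0) ^ 2 * x (0, 1, 1) ^ 2 -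
    2 * (x (0, 0, 0) * x (1, 1, 1) * x (0, 1, 1) * x (1, 0, 0) +
      x (0, 0, 0) * x (1, 1, 1) * x (1, 0, 1) * x (0, 1, 0) +
      x (0, 0, 0) * x (1, 1, 1) * x (1, 1, 0) * x (0, 0, 1) +
      x (0, 1, 1) * x (1, 0, 0) * x (1, 0, 1) * x (0, 1, 0) +
      x (0, 1, 1) * x (1, 0, 0) * x (1, 1, 0) * x (0, 0, 1) +
      x (1, 0, 1) * x (0, 1, 0) * x (1, 1, 0) * x (0, 0, 1)) +
    4 * (x (0, 0, 0) * x (1, 1, 0) * x (1, 0, 1) * x (0, 1, 1) +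
      x (1, 1, 1) * x (0, 0, 1) * x (0, 1, 0) * x (1, 0, 0))

set_option maxHeartbeats 4000000 in
/-- The 3-tangle (Cayley hyperdeterminant) of `z·ψ₀ + ψ₁`, as a polynomial in `z`, equals
`(1/4)·(A·z⁴ − 2·(2B + A)·z² + A)` with `A = (b²−c²)(a²−d²)` and `B = (c²−d²)(a²−b²)`. -/
theorem cayleyDet_G_family (a b c d : ℂ) (z : ℂ) :
    cayleyDet (z • psi0 a b c d + psi1 a b c d) =
      (1 / 4) * ((b ^ 2 - c ^ 2) * (a ^ 2 - d ^ 2) * z ^ 4 -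
        2 * (2 * ((c ^ 2 - d ^ 2) * (a ^ 2 - b ^ 2)) +
          (b ^ 2 - c ^ 2) * (a ^ 2 - d ^ 2)) * z ^ 2 +
        (b ^ 2 - c ^ 2) * (a ^ 2 - d ^ 2)) := by
  simp only [cayleyDet, psi0, psi1, Pi.add_apply, Pi.smul_apply, smul_eq_mul,
    Prod.mk.injEq, Fin.reduceEq, and_self, and_false, false_and, if_true, if_false,
    ite_true, ite_false, reduceIte]
  ring
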